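/- Let G be a countable discrete abelian group with compact dual group Ĝ, and let A = [a_{m,n}] be an M×N matrix with entries a_{m,n} ∈ ℓ²(G). Then the operator 𝒜 : x ↦ A ∗ x is a well-defined bounded operator from ℓ²_N(G) into ℓ²_M(G) if and only if every entry of the transfer matrix Â(ξ) = [â_{m,n}(ξ)] belongs to L^∞(Ĝ). -/

import Mathlib

open scoped ComplexConjugate ENNReal Matrix
open MeasureTheory

noncomputable section

namespace GroupSampling

/-- `ℓ²(G)` with values in `ℂ`. -/
abbrev ell2 (G : Type*) := lp (fun _ : G => ℂ) 2

/-- the product Hilbert space `ℓ²_N(G) = ℓ²(G) × ⋯ × ℓ²(G)` (`N` times). -/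
abbrev ell2N (G : Type*) (N : ℕ) := PiLp 2 (fun _ : Fin N => ell2 G)

/-- `ℓ²_N(G)` is complete (its uniformity is definitionally the product uniformity). -/
instance ell2N.completeSpace {G : Type*} {N : ℕ} : CompleteSpace (ell2N G N) :=
  (inferInstance : CompleteSpace (PiLp 2 (fun _ : Fin N => ell2 G)))

/-- the dual group `Ĝ` of the (countable discrete abelian) group `G`. -/
abbrev GDual (G : Type*) [AddCommGroup G] [TopologicalSpace G] : Type _ :=
  PontryaginDual (Multiplicative G)

variable {G : Type*} [AddCommGroup G] [Countable G] [TopologicalSpace G] [DiscreteTopology G]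

/-- the pairing `⟨g, ξ⟩ ∈ 𝕋 ⊆ ℂ` between a group element and a character. -/
def pairing (g : G) (ξ : GDual G) : ℂ := (ξ (Multiplicative.ofAdd g) : ℂ)

/-- translation `(T_g x)(h) = x(h - g)` on `ℓ²(G)`. -/
def shift (g : G) (x : ell2 G) : ell2 G :=
  ⟨fun h => x (h - g), by
    have hx : Summable fun h => ‖(x : ∀ _ : G, ℂ) h‖ ^ (2 : ℝ≥0∞).toReal :=
      (memℓp_gen_iff (by norm_num)).mp (lp.memℓp x)
    exact memℓp_gen (((Equiv.subRight g).summable_iff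
      (f := fun h => ‖(x : ∀ _ : G, ℂ) h‖ ^ (2 : ℝ≥0∞).toReal)).mpr hx)⟩

/-- componentwise translation on `ℓ²_N(G)`. -/
def shiftN {N : ℕ} (g : G) (x : ell2N G N) : ell2N G N := WithLp.toLp 2 (fun n => shift g (x n))

/-- the involution `x*(g) = conj (x(-g))` on `ℓ²(G)`. -/
def invol (x : ell2 G) : ell2 G :=
  ⟨fun g => conj ((x : ∀ _ : G, ℂ) (-g)), by
    have hx : Summable fun h => ‖(x : ∀ _ : G, ℂ) h‖ ^ (2 : ℝ≥0∞).toReal :=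
      (memℓp_gen_iff (by norm_num)).mp (lp.memℓp x)
    refine memℓp_gen ?_
    have := ((Equiv.neg G).summable_iff
      (f := fun h => ‖(x : ∀ _ : G, ℂ) h‖ ^ (2 : ℝ≥0∞).toReal)).mpr hx
    simpa [Function.comp_def] using this⟩

/-- entry `m` of the matrix convolution `A ∗ x` of `A ∈ M_{M×N}(ℓ²(G))` with `x ∈ ℓ²_N(G)`:
`(A ∗ x)_m(g) = Σ_{n=1}^N Σ_{g' ∈ G} a_{m,n}(g - g')·x_n(g')`. -/
def convEntry {N M : ℕ} (A : Fin M → Fin N → ell2 G) (x : ell2N G N) (m : Fin M) (g : G) : ℂ :=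
  ∑ n, ∑' g' : G, (A m n : ∀ _ : G, ℂ) (g - g') * (x n : ∀ _ : G, ℂ) g'

/-- spectral norm (largest singular value, i.e. Euclidean operator norm) of a complex matrix. -/
def specNorm {M N : ℕ} (B : Matrix (Fin M) (Fin N) ℂ) : ℝ :=
  ‖LinearMap.toContinuousLinearMap (Matrix.toEuclideanLin B)‖

/-- smallest eigenvalue `λ_min` of the positive semidefinite hermitian matrix `Bᴴ * B`. -/
def lamMin {M N : ℕ} (B : Matrix (Fin M) (Fin N) ℂ) : ℝ :=
  ⨅ i, (Matrix.isHermitian_conjTranspose_mul_self B).eigenvalues i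

/-- largest eigenvalue `λ_max` of the positive semidefinite hermitian matrix `Bᴴ * B`. -/
def lamMax {M N : ℕ} (B : Matrix (Fin M) (Fin N) ℂ) : ℝ :=
  ⨆ i, (Matrix.isHermitian_conjTranspose_mul_self B).eigenvalues i

/-- `v` is a Bessel sequence in `ℓ²_N(G)` with Bessel bound `β`. -/
def IsBesselFamily {N : ℕ} {ι : Type*} (v : ι → ell2N G N) (β : ℝ) : Prop :=
  ∀ f : ell2N G N,
    Summable (fun i => ‖(inner ℂ f (v i) : ℂ)‖ ^ 2) ∧
    ∑' i, ‖(inner ℂ f (v i) : ℂ)‖ ^ 2 ≤ β * ‖f‖ ^ 2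

/-- `v` is a frame for `ℓ²_N(G)` with frame bounds `α`, `β`. -/
def IsFrameFamily {N : ℕ} {ι : Type*} (v : ι → ell2N G N) (α β : ℝ) : Prop :=
  ∀ f : ell2N G N,
    Summable (fun i => ‖(inner ℂ f (v i) : ℂ)‖ ^ 2) ∧
    α * ‖f‖ ^ 2 ≤ ∑' i, ‖(inner ℂ f (v i) : ℂ)‖ ^ 2 ∧
    ∑' i, ‖(inner ℂ f (v i) : ℂ)‖ ^ 2 ≤ β * ‖f‖ ^ 2

variable [MeasurableSpace (GDual G)] [BorelSpace (GDual G)] [CompactSpace (GDual G)]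

/-- `F` is the Plancherel (Fourier) unitary isomorphism `ℓ²(G) ≃ L²(Ĝ)`: a linear isometric
bijection which on `ℓ¹ ∩ ℓ²` is given by the character sum `x̂(ξ) = Σ_{g∈G} x(g)·⟨-g,ξ⟩`. -/
def IsFourier (μ : Measure (GDual G)) (F : ell2 G ≃ₗᵢ[ℂ] Lp ℂ 2 μ) : Prop :=
  ∀ x : ell2 G, (Summable fun g => ‖(x : ∀ _ : G, ℂ) g‖) →
    (F x : GDual G → ℂ) =ᵐ[μ] fun ξ => ∑' g : G, (x : ∀ _ : G, ℂ) g * pairing (-g) ξ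

/-!
Conjugating by the Plancherel isomorphism `F` turns convolution with `a ∈ ℓ²(G)` into
multiplication by `â = F a`: both send `δ_g` to the translate of `a` by `g`, whose transform is
`F δ_g · â`, and a bounded operator on `ℓ²(G)` is determined by its values on the `δ_g`.
If `â ∈ L^∞` this multiplication operator is bounded on `L²`, and its conjugate is the
convolution operator. Conversely, if convolution with `a` is bounded, so is its conjugate `S`,
and `S f = â · f` for every `f ∈ L²`: the identity holds on the `F δ_g` and passes to all of `L²`
in `L¹`, where `f ↦ â · f` is continuous. Testing `S` on indicators gives
`∫_s |â|² ≤ ‖S‖² μ(s)` for every set `s`, so `|â| ≤ ‖S‖` almost everywhere. The matrix case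
reduces to the entries because `ℓ²_N(G)` is a finite product.
-/

section Generic

variable {ι 𝕜 : Type*}

theorem continuousLinearMap_ext_lp_single [NormedField 𝕜] [DecidableEq ι] {E : Type*}
    [NormedAddCommGroup E] [NormedSpace 𝕜 E] {p : ℝ≥0∞} [Fact (1 ≤ p)] (hp : p ≠ ∞)
    {T₁ T₂ : lp (fun _ : ι => 𝕜) p →L[𝕜] E}
    (h : ∀ i, T₁ (lp.single p i 1) = T₂ (lp.single p i 1)) : T₁ = T₂ := by
  have h' (i : ι) (c : 𝕜) : T₁ (lp.single p i c) = T₂ (lp.single p i c) := by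
    simpa only [← ContinuousLinearMap.map_smul, ← lp.single_smul, smul_eq_mul, mul_one] using
      congrArg (c • ·) (h i)
  ext f
  exact ((lp.hasSum_single hp f).mapL T₁).unique
    (by simpa only [h'] using (lp.hasSum_single hp f).mapL T₂)

variable {α : Type*} [MeasurableSpace α] {μ : Measure α}

theorem memLp_top_of_clm_ae_eq_mul [NontriviallyNormedField 𝕜] [SigmaFinite μ] {p : ℝ≥0∞}
    [Fact (1 ≤ p)] (hp : p ≠ ∞) {w : α → 𝕜} (hw : AEStronglyMeasurable w μ)
    (S : Lp 𝕜 p μ →L[𝕜] Lp 𝕜 p μ) (hS : ∀ f, S f =ᵐ[μ] fun x => w x * f x) : MemLp w ∞ μ := by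
  have hp₀ : p ≠ 0 := (zero_lt_one.trans_le Fact.out).ne'
  have hp_pos : 0 < p.toReal := ENNReal.toReal_pos hp₀ hp
  have hsetLIntegral (s : Set α) (hs : MeasurableSet s) (hμs : μ s < ∞) :
      ∫⁻ x in s, ‖w x‖ₑ ^ p.toReal ∂μ ≤ ∫⁻ x in s, ‖S‖ₑ ^ p.toReal ∂μ := by
    set χ := indicatorConstLp p hs hμs.ne (1 : 𝕜)
    have hSχ : S χ =ᵐ[μ] s.indicator w := by
      filter_upwards [hS χ,
        indicatorConstLp_coeFn (p := p) (hs := hs) (hμs := hμs.ne) (c := (1 : 𝕜))] with x hx hχx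
      rw [hx, hχx]
      by_cases hxs : x ∈ s <;> simp [hxs]
    have hnorm : eLpNorm w p (μ.restrict s) ≤ ‖S‖ₑ * μ s ^ (1 / p.toReal) := calc
      eLpNorm w p (μ.restrict s) = ‖S χ‖ₑ := by
        rw [← eLpNorm_indicator_eq_eLpNorm_restrict hs, ← eLpNorm_congr_ae hSχ, Lp.enorm_def]
      _ ≤ ‖S‖ₑ * ‖χ‖ₑ := S.le_opENorm χ
      _ ≤ ‖S‖ₑ * μ s ^ (1 / p.toReal) := by
        gcongr
        simpa using enorm_indicatorConstLp_le (p := p) (hs := hs) (hμs := hμs.ne) (c := (1 : 𝕜))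
    calc ∫⁻ x in s, ‖w x‖ₑ ^ p.toReal ∂μ = eLpNorm w p (μ.restrict s) ^ p.toReal := by
          rw [lintegral_rpow_enorm_eq_rpow_eLpNorm' hp_pos, eLpNorm_eq_eLpNorm' hp₀ hp]
      _ ≤ (‖S‖ₑ * μ s ^ (1 / p.toReal)) ^ p.toReal := by gcongr
      _ = ∫⁻ x in s, ‖S‖ₑ ^ p.toReal ∂μ := by
        rw [setLIntegral_const, ENNReal.mul_rpow_of_nonneg _ _ hp_pos.le, ← ENNReal.rpow_mul,
          one_div_mul_cancel hp_pos.ne', ENNReal.rpow_one]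
  have hbound : ∀ᵐ x ∂μ, ‖w x‖ₑ ≤ ‖S‖ₑ := by
    filter_upwards [ae_le_of_forall_setLIntegral_le_of_sigmaFinite₀
      (hw.enorm.pow_const p.toReal) hsetLIntegral] with x hx
    exact (ENNReal.rpow_le_rpow_iff hp_pos).mp hx
  refine ⟨hw, ?_⟩
  rw [eLpNorm_exponent_top]
  exact (eLpNormEssSup_le_of_ae_enorm_bound hbound).trans_lt enorm_lt_top

theorem ae_eq_mul_of_forall_single [NontriviallyNormedField 𝕜] [DecidableEq ι]
    [IsFiniteMeasure μ] (w : Lp 𝕜 2 μ) (S₁ S₂ : lp (fun _ : ι => 𝕜) 2 →L[𝕜] Lp 𝕜 2 μ)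
    (h : ∀ i, S₁ (lp.single 2 i 1) =ᵐ[μ] fun x => w x * S₂ (lp.single 2 i 1) x)
    (y : lp (fun _ : ι => 𝕜) 2) : S₁ y =ᵐ[μ] fun x => w x * S₂ y x := by
  set B := ContinuousLinearMap.mul 𝕜 𝕜
  -- both sides are continuous into `L¹`, where `w * f` lives for `f ∈ L²`
  have hL : B.holderL μ 2 2 1 (Lp.const 2 μ 1) ∘L S₁ = B.holderL μ 2 2 1 w ∘L S₂ := by
    refine continuousLinearMap_ext_lp_single ENNReal.ofNat_ne_top fun i => Lp.ext ?_
    filter_upwards [B.coeFn_holder (r := 1) (Lp.const 2 μ 1) (S₁ (lp.single 2 i 1)),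
      B.coeFn_holder (r := 1) w (S₂ (lp.single 2 i 1)), Lp.coeFn_const 2 μ (1 : 𝕜), h i]
      with x h₁ h₂ h₃ h₄
    simp only [ContinuousLinearMap.comp_apply, ContinuousLinearMap.holderL_apply_apply]
    rw [h₁, h₂, h₃, h₄]
    simp [B]
  filter_upwards [B.coeFn_holder (r := 1) (Lp.const 2 μ 1) (S₁ y),
    B.coeFn_holder (r := 1) w (S₂ y), Lp.coeFn_const 2 μ (1 : 𝕜)] with x h₁ h₂ h₃
  have := congrFun (congrArg (⇑) (DFunLike.congr_fun hL y)) x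
  simp only [ContinuousLinearMap.comp_apply, ContinuousLinearMap.holderL_apply_apply] at this
  rw [h₁, h₂, h₃] at this
  simpa [B] using this

end Generic

section Convolution

variable {G : Type*} [AddCommGroup G]

def conv (a y : ell2 G) (g : G) : ℂ := ∑' g', (a : G → ℂ) (g - g') * (y : G → ℂ) g'

theorem conv_eq_inner (a y : ell2 G) (g : G) : conv a y g = inner ℂ (shift g (invol a)) y := by
  rw [lp.inner_eq_tsum]
  simp [conv, shift, invol, mul_comm]

variable [DecidableEq G]

theorem conv_single_right (a : ell2 G) (g g' : G) :
    conv a (lp.single 2 g' 1) g = (a : G → ℂ) (g - g') := by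
  rw [conv, tsum_eq_single g']
  · simp
  · intro b hb
    simp [hb]

theorem conv_single_left (y : ell2 G) (g h : G) :
    conv (lp.single 2 g 1) y h = (shift g y : G → ℂ) h := by
  rw [conv, tsum_eq_single (h - g)]
  · simp [shift]
  · intro b hb
    rw [lp.single_apply_ne, zero_mul]
    contrapose! hb
    rw [← hb, sub_sub_cancel]

theorem shift_single (g g' : G) : shift g (lp.single 2 g' (1 : ℂ)) = lp.single 2 (g' + g) 1 := by
  ext h
  simp only [shift, lp.single_apply, Pi.single_apply, sub_eq_iff_eq_add]

theorem forall_apply_eq_conv_iff (a : ell2 G) (T : ell2 G →L[ℂ] ell2 G) :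
    (∀ y g, (T y : G → ℂ) g = conv a y g) ↔ ∀ g, T (lp.single 2 g 1) = shift g a := by
  constructor
  · intro hT g
    ext h
    rw [hT, conv_single_right]
    rfl
  · intro hT y g
    have : lp.evalCLM ℂ (fun _ : G => ℂ) 2 g ∘L T = innerSL ℂ (shift g (invol a)) := by
      refine continuousLinearMap_ext_lp_single ENNReal.ofNat_ne_top fun g' => ?_
      simp only [ContinuousLinearMap.comp_apply, innerSL_apply_apply, ← conv_eq_inner,
        conv_single_right, hT]
      rfl
    rw [conv_eq_inner]
    exact congrArg (· y) this

end Convolution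

section Fourier

variable {G : Type*} [AddCommGroup G] [TopologicalSpace G]

@[simp]
theorem norm_pairing (g : G) (ξ : GDual G) : ‖pairing g ξ‖ = 1 := by
  simp [pairing, Circle.norm_coe]

theorem pairing_add (g g' : G) (ξ : GDual G) :
    pairing (g + g') ξ = pairing g ξ * pairing g' ξ := by
  simp [pairing, ofAdd_add]

variable [MeasurableSpace (GDual G)] {μ : Measure (GDual G)} {F : ell2 G ≃ₗᵢ[ℂ] Lp ℂ 2 μ}

variable (F) in
def fourierMultiplier (w : Lp ℂ ∞ μ) : ell2 G →L[ℂ] ell2 G :=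
  (F.symm.toContinuousLinearEquiv : Lp ℂ 2 μ →L[ℂ] ell2 G) ∘L
    (ContinuousLinearMap.mul ℂ ℂ).holderL μ ∞ 2 2 w ∘L
    (F.toContinuousLinearEquiv : ell2 G →L[ℂ] Lp ℂ 2 μ)

theorem fourier_fourierMultiplier (w : Lp ℂ ∞ μ) (y : ell2 G) :
    F (fourierMultiplier F w y) =ᵐ[μ] fun ξ => w ξ * F y ξ := by
  simpa [fourierMultiplier] using
    (ContinuousLinearMap.mul ℂ ℂ).coeFn_holder (r := 2) w (F y)

variable [DecidableEq G]

theorem fourier_single (hF : IsFourier μ F) (g : G) :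
    F (lp.single 2 g 1) =ᵐ[μ] pairing (-g) := by
  have hsum : Summable fun h => ‖(lp.single 2 g (1 : ℂ) : G → ℂ) h‖ :=
    summable_of_ne_finset_zero (s := {g}) fun h hh => by simp_all
  filter_upwards [hF _ hsum] with ξ hξ
  rw [hξ, tsum_eq_single g fun h hh => by simp [hh]]
  simp

theorem memLp_top_fourier_single (hF : IsFourier μ F) (g : G) :
    MemLp (F (lp.single 2 g 1)) ∞ μ :=
  memLp_top_of_bound (Lp.aestronglyMeasurable _) 1 <| by
    filter_upwards [fourier_single hF g] with ξ hξ
    simp [hξ]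

theorem fourierMultiplier_apply_eq_conv (w : Lp ℂ ∞ μ) (a : ell2 G)
    (h : ∀ g, F (shift g a) =ᵐ[μ] fun ξ => w ξ * F (lp.single 2 g 1) ξ) (y : ell2 G) (g : G) :
    (fourierMultiplier F w y : G → ℂ) g = conv a y g := by
  refine (forall_apply_eq_conv_iff a _).mpr (fun g' => ?_) y g
  apply F.injective
  exact Lp.ext ((fourier_fourierMultiplier w _).trans (h g').symm)

theorem fourier_shift (hF : IsFourier μ F) (g : G) (y : ell2 G) :
    F (shift g y) =ᵐ[μ] fun ξ => F (lp.single 2 g 1) ξ * F y ξ := by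
  have hw := memLp_top_fourier_single hF g
  -- translation by `g` is convolution with `δ_g`, whose transform is a bounded character
  have hshift : shift g y = fourierMultiplier F hw.toLp y := by
    ext h
    rw [fourierMultiplier_apply_eq_conv hw.toLp (lp.single 2 g 1), conv_single_left]
    intro g'
    rw [shift_single]
    filter_upwards [fourier_single hF (g + g'), fourier_single hF g, fourier_single hF g',
      hw.coeFn_toLp] with ξ h₁ h₂ h₃ h₄
    rw [h₁, h₃, h₄, h₂, neg_add, pairing_add]
  rw [hshift]
  filter_upwards [fourier_fourierMultiplier hw.toLp y, hw.coeFn_toLp] with ξ h₁ h₂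
  rw [h₁, h₂]

end Fourier

section Boundedness

variable {G : Type*} [AddCommGroup G] [TopologicalSpace G] [MeasurableSpace (GDual G)]
  {μ : Measure (GDual G)} {F : ell2 G ≃ₗᵢ[ℂ] Lp ℂ 2 μ}

theorem exists_clm_conv_iff_memLp_top [IsFiniteMeasure μ] (hF : IsFourier μ F) (a : ell2 G) :
    (∃ T : ell2 G →L[ℂ] ell2 G, ∀ y g, (T y : G → ℂ) g = conv a y g) ↔ MemLp (F a) ∞ μ := by
  classical
  constructor
  · rintro ⟨T, hT⟩
    have hT_single := (forall_apply_eq_conv_iff a T).mp hT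
    have hmul (y : ell2 G) : F (T y) =ᵐ[μ] fun ξ => F a ξ * F y ξ := by
      refine ae_eq_mul_of_forall_single (F a) ((F.toContinuousLinearEquiv : ell2 G →L[ℂ] _) ∘L T)
        F.toContinuousLinearEquiv (fun g => ?_) y
      simp only [ContinuousLinearMap.comp_apply, ContinuousLinearEquiv.coe_coe,
        LinearIsometryEquiv.coe_toContinuousLinearEquiv, hT_single]
      filter_upwards [fourier_shift hF g a] with ξ hξ
      rw [hξ, mul_comm]
    refine memLp_top_of_clm_ae_eq_mul ENNReal.ofNat_ne_top (Lp.aestronglyMeasurable _)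
      ((F.toContinuousLinearEquiv : ell2 G →L[ℂ] _) ∘L T ∘L
        (F.symm.toContinuousLinearEquiv : Lp ℂ 2 μ →L[ℂ] ell2 G)) fun f => ?_
    simpa using hmul (F.symm f)
  · intro ha
    refine ⟨fourierMultiplier F ha.toLp, fourierMultiplier_apply_eq_conv ha.toLp a fun g => ?_⟩
    filter_upwards [fourier_shift hF g a, ha.coeFn_toLp] with ξ h₁ h₂
    rw [h₁, h₂, mul_comm]

end Boundedness

section Matrix

variable {G : Type*} [AddCommGroup G] {M N : ℕ}

theorem convEntry_eq_sum_conv (A : Fin M → Fin N → ell2 G) (x : ell2N G N) (m : Fin M) (g : G) :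
    convEntry A x m g = ∑ n, conv (A m n) (x n) g := rfl

theorem exists_clm_convEntry_iff (A : Fin M → Fin N → ell2 G) :
    (∃ T : ell2N G N →L[ℂ] ell2N G M, ∀ x m g, (T x m : G → ℂ) g = convEntry A x m g) ↔
      ∀ m n, ∃ T : ell2 G →L[ℂ] ell2 G, ∀ y g, (T y : G → ℂ) g = conv (A m n) y g := by
  classical
  constructor
  · rintro ⟨T, hT⟩ m n
    refine ⟨PiLp.proj 2 _ m ∘L T ∘L
      (PiLp.continuousLinearEquiv 2 ℂ _).symm.toContinuousLinearMap ∘L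
      ContinuousLinearMap.single ℂ (fun _ : Fin N => ell2 G) n, fun y g => ?_⟩
    simp only [ContinuousLinearMap.comp_apply, PiLp.proj_apply, hT, convEntry_eq_sum_conv]
    rw [Finset.sum_eq_single n (fun n' _ hn' => by simp [hn', conv]) (by simp)]
    simp
  · intro hA
    choose T hT using hA
    refine ⟨(PiLp.continuousLinearEquiv 2 ℂ _).symm.toContinuousLinearMap ∘L
      ContinuousLinearMap.pi fun m => ∑ n, T m n ∘L PiLp.proj 2 _ n, fun x m g => ?_⟩
    simp only [ContinuousLinearMap.comp_apply, ContinuousLinearEquiv.coe_coe,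
      PiLp.continuousLinearEquiv_symm_apply, PiLp.toLp_apply, ContinuousLinearMap.pi_apply,
      FunLike.coe_sum, Finset.sum_apply, PiLp.proj_apply]
    rw [lp.coeFn_sum, Finset.sum_apply, convEntry_eq_sum_conv]
    simp only [hT]

end Matrix

theorem statement0_general
    (μ : Measure (GDual G)) [IsProbabilityMeasure μ]
    (F : ell2 G ≃ₗᵢ[ℂ] Lp ℂ 2 μ) (hF : IsFourier μ F)
    {M N : ℕ} (A : Fin M → Fin N → ell2 G) :
    (∃ T : ell2N G N →L[ℂ] ell2N G M,
        ∀ (x : ell2N G N) (m : Fin M) (g : G), (T x m : ∀ _ : G, ℂ) g = convEntry A x m g)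
      ↔ ∀ (m : Fin M) (n : Fin N), MemLp (⇑(F (A m n))) ∞ μ := by
  simp only [exists_clm_convEntry_iff, exists_clm_conv_iff_memLp_top hF]

/-- The convolution operator `x ↦ A ∗ x` is a well defined bounded operator
from `ℓ²_N(G)` into `ℓ²_M(G)` iff every entry of the transfer matrix `Â = [â_{m,n}]`
belongs to `L^∞(Ĝ)`. -/
theorem statement0
    (μ : Measure (GDual G)) [IsProbabilityMeasure μ] [μ.IsHaarMeasure]
    (F : ell2 G ≃ₗᵢ[ℂ] Lp ℂ 2 μ) (hF : IsFourier μ F)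
    {M N : ℕ} (A : Fin M → Fin N → ell2 G) :
    (∃ T : ell2N G N →L[ℂ] ell2N G M,
        ∀ (x : ell2N G N) (m : Fin M) (g : G), (T x m : ∀ _ : G, ℂ) g = convEntry A x m g)
      ↔ ∀ (m : Fin M) (n : Fin N), MemLp (⇑(F (A m n))) ∞ μ :=
  statement0_general μ F hF A

end GroupSampling
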